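/- arXiv:1708.08049 — 2 statements merged into one kernel-verified Lean document; each statement's English description precedes it below -/
import Mathlib

section
/- Suppose μ is a singular cardinal with cf(μ) = ω and μ < 2^ω, (μ_n : n < ω) is a strictly increasing sequence of regular cardinals with supremum μ, J is an ideal on ω extending the ideal of finite sets, and (f_α : α < μ⁺) is a sequence of functions f_α ∈ ∏_{n<ω} μ_n witnessing tcf(∏_{n<ω} μ_n, J) = μ⁺. Assume further that for every A ⊆ μ⁺ with |A| = ℵ₁ one has |{f_α(n) : α ∈ A, n < ω}| = ℵ₁. Then 𝔤𝔭 ≠ μ. -/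
open Cardinal Set

universe u

/-- `C` is a club subset of the ordinal `δ`: it consists of ordinals below `δ`,
is unbounded in `δ`, and contains every limit ordinal `β < δ` with `sup (C ∩ β) = β`. -/
def IsClubIn (δ : Ordinal) (C : Set Ordinal) : Prop :=
  C ⊆ Set.Iio δ ∧ (∀ a < δ, ∃ b ∈ C, a ≤ b) ∧
    ∀ β < δ, Order.IsSuccLimit β → sSup (C ∩ Set.Iio β) = β → β ∈ C

/-- `A` is a set of ordinals of cardinality `c` (witnessed by a bijective
enumeration of `A` by the ordinals below `c.ord`). -/
def HasCard (A : Set Ordinal.{u}) (c : Cardinal.{u}) : Prop :=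
  ∃ e : Ordinal → Ordinal, Set.BijOn e (Set.Iio c.ord) A

/-- An ideal on the set of ordinals below `θ`. -/
structure IdealOn (θ : Ordinal) where
  sets : Set (Set Ordinal)
  subset_Iio : ∀ A ∈ sets, A ⊆ Set.Iio θ
  mem_of_subset : ∀ A ∈ sets, ∀ B ⊆ A, B ∈ sets
  union_mem : ∀ A ∈ sets, ∀ B ∈ sets, A ∪ B ∈ sets
  proper : Set.Iio θ ∉ sets

/-- `(f α : α < lam.ord)` is a `<_J`-increasing, `<_J`-cofinal sequence in the
product `∏_{i<θ} μs i`, witnessing `tcf (∏_{i<θ} μs i, J) = lam`. -/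
def IsTcfWitness (θ : Ordinal) (J : IdealOn θ) (μs : Ordinal → Cardinal)
    (lam : Cardinal) (f : Ordinal → Ordinal → Ordinal) : Prop :=
  (∀ α < lam.ord, ∀ i < θ, f α i < (μs i).ord) ∧
  (∀ α β, α < β → β < lam.ord → {i | i < θ ∧ f β i ≤ f α i} ∈ J.sets) ∧
  (∀ g : Ordinal → Ordinal, (∀ i < θ, g i < (μs i).ord) →
    ∃ α < lam.ord, {i | i < θ ∧ f α i ≤ g i} ∈ J.sets)

/-- The Galvin cardinal characteristic `𝔤𝔭`: the least cardinal `κ` such that every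
family `{C α : α < κ⁺}` of clubs of `ω₁` has a subfamily of size `ℵ₁`
whose intersection is a club of `ω₁`. -/
noncomputable def gp : Cardinal.{u} :=
  sInf {κ : Cardinal.{u} | ∀ C : Ordinal.{u} → Set Ordinal.{u},
    (∀ α < (Order.succ κ).ord, IsClubIn (Cardinal.aleph 1).ord (C α)) →
    ∃ b : Ordinal.{u} → Ordinal.{u},
      (∀ β < (Cardinal.aleph 1).ord, b β < (Order.succ κ).ord) ∧
      Set.InjOn b (Set.Iio (Cardinal.aleph 1).ord) ∧
      IsClubIn (Cardinal.aleph 1).ord (⋂ β ∈ Set.Iio (Cardinal.aleph 1).ord, C (b β))}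

/-!
Suppose `𝔤𝔭 = μ`. Each `μₙ < μ` then fails the Galvin property, witnessed by a family `Cₙ` of
`μₙ⁺` clubs of `ω₁` no `ℵ₁` of which have a club intersection. Along the scale,
`D α = ⋂ₙ Cₙ (f α n)` is a family of `μ⁺` clubs, so some `ℵ₁` of them, indexed by `A`, have a club
intersection `E`. The values `f α n` with `α ∈ A` form an uncountable set, hence a single
coordinate `n` takes uncountably many values on `A`; choosing `ℵ₁` of them gives `ℵ₁` clubs
`Cₙ x`, all containing `E`, whose intersection is therefore a club: a contradiction.
-/

open Order

theorem mem_of_forall_inter_Ioo_nonempty {δ β : Ordinal} {C : Set Ordinal}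
    (hC : ∀ β < δ, IsSuccLimit β → sSup (C ∩ Iio β) = β → β ∈ C) (hβδ : β < δ) (hβ : β ≠ 0)
    (hcof : ∀ w < β, (C ∩ Ioo w β).Nonempty) : β ∈ C := by
  obtain ⟨y₀, hy₀C, -, hy₀β⟩ := hcof 0 (pos_iff_ne_zero.2 hβ)
  refine hC β hβδ (Ordinal.isSuccLimit_iff.2 ⟨hβ, isSuccPrelimit_of_succ_lt fun w hw => ?_⟩) ?_
  · obtain ⟨y, -, hwy, hyβ⟩ := hcof w hw
    exact (succ_le_of_lt hwy).trans_lt hyβ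
  · refine csSup_eq_of_forall_le_of_forall_lt_exists_gt ⟨y₀, hy₀C, hy₀β⟩
      (fun y hy => hy.2.le) fun w hw => ?_
    obtain ⟨y, hyC, hwy, hyβ⟩ := hcof w hw
    exact ⟨y, ⟨hyC, hyβ⟩, hwy⟩

theorem isClubIn_iff {δ : Ordinal} {C : Set Ordinal} :
    IsClubIn δ C ↔ C ⊆ Iio δ ∧ IsClub (Subtype.val ⁻¹' C : Set (Iio δ)) := by
  refine ⟨fun ⟨hCδ, hunb, hclosed⟩ => ⟨hCδ, ⟨?_, ?_⟩⟩,
    fun ⟨hCδ, hclosed, hunb⟩ => ⟨hCδ, ?_, ?_⟩⟩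
  · intro d hdC ⟨y₀, hy₀⟩ _ a ha
    by_cases had : a ∈ d
    · exact hdC had
    -- a supremum not attained in `d` is a limit of points of `d ⊆ C` below it
    have hlt : ∀ c ∈ d, c < a := fun c hc => lt_of_le_of_ne (ha.1 hc) (ne_of_mem_of_not_mem hc had)
    refine mem_of_forall_inter_Ioo_nonempty hclosed a.2 (ne_bot_of_gt (hlt y₀ hy₀)) fun w hw => ?_
    obtain ⟨c, hcd, hwc, -⟩ := ha.exists_between (b := ⟨w, hw.trans a.2⟩) hw
    exact ⟨c, hdC hcd, hwc, hlt c hcd⟩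
  · intro a
    obtain ⟨y, hyC, hay⟩ := hunb a a.2
    exact ⟨⟨y, hCδ hyC⟩, hyC, hay⟩
  · intro a ha
    obtain ⟨y, hyC, hay⟩ := hunb ⟨a, ha⟩
    exact ⟨y, hyC, hay⟩
  · intro β hβδ hβ hsup
    have hne : (C ∩ Iio β).Nonempty := by
      by_contra! h
      rw [h, csSup_empty] at hsup
      exact hβ.ne_bot hsup.symm
    obtain ⟨y₀, hy₀C, hy₀β⟩ := hne
    refine hclosed (d := Subtype.val ⁻¹' (C ∩ Iio β)) (fun x hx => hx.1)
      ⟨⟨y₀, hy₀β.trans hβδ⟩, hy₀C, hy₀β⟩ (.of_linearOrder _) (a := ⟨β, hβδ⟩)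
      ⟨fun x hx => hx.2.le, fun b hb => ?_⟩
    show β ≤ b.val
    rw [← hsup]
    exact csSup_le' fun y hy => hb (a := ⟨y, hy.2.trans hβδ⟩) hy

theorem IsClubIn.iInter_of_countable {ι : Sort*} [Countable ι] [Nonempty ι] {δ : Ordinal}
    (hδ : δ.cof ≠ ℵ₀) {C : ι → Set Ordinal} (hC : ∀ i, IsClubIn δ (C i)) :
    IsClubIn δ (⋂ i, C i) := by
  simp only [isClubIn_iff] at hC ⊢
  refine ⟨(iInter_subset _ (Classical.arbitrary ι)).trans (hC _).1, ?_⟩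
  rw [preimage_iInter]
  refine IsClub.iInter_of_countable ?_ fun i => (hC i).2
  rwa [Ordinal.cof_Iio, ← Ordinal.lift_cof, Ne, Cardinal.lift_eq_aleph0]

theorem IsClubIn.biInter_of_subset {α : Type*} {s : Set α} (hs : s.Nonempty) {δ : Ordinal}
    {C : α → Set Ordinal} (hC : ∀ i ∈ s, IsClubIn δ (C i)) {E : Set Ordinal}
    (hE : IsClubIn δ E) (hEC : E ⊆ ⋂ i ∈ s, C i) : IsClubIn δ (⋂ i ∈ s, C i) := by
  obtain ⟨i₀, hi₀⟩ := hs
  simp only [isClubIn_iff] at hC hE ⊢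
  refine ⟨(biInter_subset_of_mem hi₀).trans (hC i₀ hi₀).1, ?_,
    hE.2.isCofinal.mono (preimage_mono hEC)⟩
  rw [preimage_iInter₂]
  exact DirSupClosed.iInter fun i => DirSupClosed.iInter fun hi => (hC i hi).2.dirSupClosed

theorem HasCard.mk_eq {A : Set Ordinal.{u}} {c : Cardinal.{u}} (hA : HasCard A c) :
    #A = Cardinal.lift.{u + 1} c := by
  obtain ⟨e, he⟩ := hA
  rw [← Cardinal.mk_congr he.equiv, Cardinal.mk_Iio_ordinal, Cardinal.card_ord]

theorem HasCard.not_countable {A : Set Ordinal.{u}} (hA : HasCard A ℵ₁) : ¬ A.Countable := by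
  rw [← Cardinal.le_aleph0_iff_set_countable, hA.mk_eq, not_le]
  simp

theorem exists_injOn_Iio_aleph_one {X : Set Ordinal.{u}} (hX : ¬ X.Countable) :
    ∃ b : Ordinal.{u} → Ordinal.{u}, MapsTo b (Iio (ord ℵ₁)) X ∧ InjOn b (Iio (ord ℵ₁)) := by
  have hle : #(Iio (ord ℵ₁ : Ordinal.{u})) ≤ #X := by
    rw [Cardinal.mk_Iio_ordinal, Cardinal.card_ord, Cardinal.lift_aleph, Ordinal.lift_one,
      ← Cardinal.succ_aleph0]
    exact succ_le_of_lt (not_le.1 (mt Cardinal.le_aleph0_iff_set_countable.1 hX))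
  obtain ⟨j⟩ := hle
  refine ⟨fun β => if h : β < ord ℵ₁ then j ⟨β, h⟩ else 0, fun β (hβ : β < ord ℵ₁) => ?_,
    fun x (hx : x < ord ℵ₁) y (hy : y < ord ℵ₁) hxy => ?_⟩
  · simpa only [dif_pos hβ] using (j ⟨β, hβ⟩).2
  · simp only [dif_pos hx, dif_pos hy] at hxy
    exact congrArg Subtype.val (j.injective (Subtype.val_injective hxy))

def HasClubSubfamily (θ : Ordinal.{u}) (C : Ordinal.{u} → Set Ordinal.{u}) : Prop :=
  ∃ b : Ordinal.{u} → Ordinal.{u}, (∀ β < ord ℵ₁, b β < θ) ∧ InjOn b (Iio (ord ℵ₁)) ∧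
    IsClubIn (ord ℵ₁) (⋂ β ∈ Iio (ord ℵ₁), C (b β))

-- `gp` unfolds to `sInf {κ | GalvinProperty κ}`.
def GalvinProperty (κ : Cardinal.{u}) : Prop :=
  ∀ C : Ordinal.{u} → Set Ordinal.{u}, (∀ α < (succ κ).ord, IsClubIn (ord ℵ₁) (C α)) →
    HasClubSubfamily (succ κ).ord C

theorem galvinProperty_gp (h : gp.{u} ≠ 0) : GalvinProperty gp.{u} := by
  refine csInf_mem (s := {κ | GalvinProperty κ}) ?_
  by_contra hempty
  rw [not_nonempty_iff_eq_empty] at hempty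
  refine h ?_
  change sInf {κ | GalvinProperty κ} = 0
  rw [hempty, Cardinal.sInf_empty]

theorem not_galvinProperty_of_lt_gp {κ : Cardinal.{u}} (h : κ < gp) : ¬ GalvinProperty κ :=
  notMem_of_lt_csInf h (OrderBot.bddBelow _)

theorem cof_ord_aleph_one_ne_aleph0 : (ord ℵ₁ : Ordinal.{u}).cof ≠ ℵ₀ := by
  rw [isRegular_aleph_one.cof_ord]
  exact aleph0_lt_aleph_one.ne'

theorem hasClubSubfamily_of_not_countable {θ : Ordinal.{u}} {C : Ordinal.{u} → Set Ordinal.{u}}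
    {X : Set Ordinal.{u}} (hXθ : X ⊆ Iio θ) (hX : ¬ X.Countable)
    (hC : ∀ x ∈ X, IsClubIn (ord ℵ₁) (C x)) {E : Set Ordinal.{u}} (hE : IsClubIn (ord ℵ₁) E)
    (hEC : E ⊆ ⋂ x ∈ X, C x) : HasClubSubfamily θ C := by
  obtain ⟨b, hbX, hbinj⟩ := exists_injOn_Iio_aleph_one hX
  refine ⟨b, fun β hβ => hXθ (hbX hβ), hbinj, ?_⟩
  have hω₁ : (0 : Ordinal) ∈ Iio (ord ℵ₁) := (isSuccLimit_ord (aleph0_le_aleph 1)).bot_lt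
  refine IsClubIn.biInter_of_subset ⟨0, hω₁⟩ (fun β hβ => hC _ (hbX hβ)) hE ?_
  exact hEC.trans (subset_iInter₂ fun β hβ => biInter_subset_of_mem (hbX hβ))

theorem GalvinProperty.exists_of_not_countable {lam : Cardinal.{u}} {κ : ℕ → Cardinal.{u}}
    {f : Ordinal.{u} → ℕ → Ordinal.{u}} (hlam : GalvinProperty lam)
    (hf : ∀ α < (succ lam).ord, ∀ n, f α n < (succ (κ n)).ord)
    (hA : ∀ A ⊆ Iio (succ lam).ord, HasCard A ℵ₁ → ¬ (⋃ n, (f · n) '' A).Countable) :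
    ∃ n, GalvinProperty (κ n) := by
  by_contra! hbad
  simp only [GalvinProperty, not_forall] at hbad
  choose C hC hCbad using hbad
  obtain ⟨b, hbθ, hbinj, hbclub⟩ := hlam (fun α => ⋂ n, C n (f α n)) fun α hα =>
    IsClubIn.iInter_of_countable cof_ord_aleph_one_ne_aleph0 fun n => hC n _ (hf α hα n)
  set A := b '' Iio (ord ℵ₁)
  obtain ⟨n, hn⟩ : ∃ n, ¬ ((f · n) '' A).Countable := by
    by_contra! h
    exact hA A (image_subset_iff.2 hbθ) ⟨b, hbinj.bijOn_image⟩ (countable_iUnion h)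
  refine hCbad n (hasClubSubfamily_of_not_countable ?_ hn ?_ hbclub ?_)
  · rintro _ ⟨_, ⟨β, hβ, rfl⟩, rfl⟩
    exact hf _ (hbθ β hβ) n
  · rintro _ ⟨_, ⟨β, hβ, rfl⟩, rfl⟩
    exact hC n _ (hf _ (hbθ β hβ) n)
  · refine subset_iInter₂ ?_
    rintro _ ⟨_, ⟨β, hβ, rfl⟩, rfl⟩
    exact (biInter_subset_of_mem hβ).trans (iInter_subset _ n)

theorem setOf_exists_lt_omega0_eq_iUnion (f : Ordinal → Ordinal → Ordinal) (A : Set Ordinal) :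
    {x | ∃ α ∈ A, ∃ i < Ordinal.omega0, f α i = x} = ⋃ n : ℕ, (f · n) '' A := by
  ext x
  simp only [mem_iUnion, mem_image, Ordinal.lt_omega0]
  grind

theorem gp_ne_of_scale_omega_general (μ : Cardinal.{u}) (μs : Ordinal.{u} → Cardinal.{u})
    (J : IdealOn Ordinal.omega0.{u}) (f : Ordinal.{u} → Ordinal.{u} → Ordinal.{u})
    (hmono : ∀ i j, i < j → j < Ordinal.omega0 → μs i < μs j)
    (hsup : sSup (μs '' Set.Iio Ordinal.omega0) = μ)
    (hf : IsTcfWitness Ordinal.omega0 J μs (Order.succ μ) f)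
    (hA : ∀ A : Set Ordinal.{u}, A ⊆ Set.Iio (Order.succ μ).ord →
      HasCard A (Cardinal.aleph 1) →
      HasCard {x : Ordinal | ∃ α ∈ A, ∃ i < Ordinal.omega0, f α i = x} (Cardinal.aleph 1)) :
    gp ≠ μ := by
  intro hgp
  have hμs : ∀ n : ℕ, μs n < μ := fun n =>
    calc μs n < μs (n + 1 : ℕ) := hmono _ _ (by simp) (Ordinal.natCast_lt_omega0 _)
      _ ≤ μ := hsup ▸ le_csSup Cardinal.bddAbove_of_small
          (mem_image_of_mem _ (Ordinal.natCast_lt_omega0 _))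
  have hgalvin : GalvinProperty μ := hgp ▸ galvinProperty_gp (hgp ▸ (hμs 0).ne_bot)
  obtain ⟨n, hn⟩ := hgalvin.exists_of_not_countable (κ := fun n => μs n) (f := fun α n => f α n)
    (fun α hα n => (hf.1 α hα n (Ordinal.natCast_lt_omega0 n)).trans_le (ord_le_ord.2 (le_succ _)))
    fun A hAμ hAcard => setOf_exists_lt_omega0_eq_iUnion f A ▸ (hA A hAμ hAcard).not_countable
  exact not_galvinProperty_of_lt_gp (hgp ▸ hμs n) hn

/-- If `μ` is a singular cardinal with `cf μ = ω` and `μ < 2^ω`,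
`(μs n : n < ω)` is a strictly increasing sequence of regular cardinals with supremum `μ`,
`J` is an ideal on `ω` extending the ideal of finite (= bounded) sets, `f` witnesses
`tcf (∏_{n<ω} μs n, J) = μ⁺`, and every `A ⊆ μ⁺` of size `ℵ₁` satisfies
`|{f α n : α ∈ A, n < ω}| = ℵ₁`, then `𝔤𝔭 ≠ μ`. -/
theorem gp_ne_of_scale_omega (μ : Cardinal.{u}) (μs : Ordinal.{u} → Cardinal.{u})
    (J : IdealOn Ordinal.omega0.{u}) (f : Ordinal.{u} → Ordinal.{u} → Ordinal.{u})
    (hcof : μ.ord.cof = Cardinal.aleph0)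
    (hsing : Cardinal.aleph0 < μ)
    (hcont : μ < 2 ^ Cardinal.aleph0)
    (hreg : ∀ i < Ordinal.omega0, (μs i).IsRegular)
    (hmono : ∀ i j, i < j → j < Ordinal.omega0 → μs i < μs j)
    (hsup : sSup (μs '' Set.Iio Ordinal.omega0) = μ)
    (hJ : ∀ δ < Ordinal.omega0, Set.Iio δ ∈ J.sets)
    (hf : IsTcfWitness Ordinal.omega0 J μs (Order.succ μ) f)
    (hA : ∀ A : Set Ordinal.{u}, A ⊆ Set.Iio (Order.succ μ).ord →
      HasCard A (Cardinal.aleph 1) →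
      HasCard {x : Ordinal | ∃ α ∈ A, ∃ i < Ordinal.omega0, f α i = x} (Cardinal.aleph 1)) :
    gp ≠ μ :=
  gp_ne_of_scale_omega_general μ μs J f hmono hsup hf hA
end

section
/- Let θ be a regular cardinal with θ > ω₂, and let M and N be countable sets with M ≺ N ≺ (H(θ), ∈), i.e., M is an elementary substructure of N and N is an elementary substructure of H(θ) in the language with one binary relation symbol interpreted as membership. If M ∩ ω₁ = N ∩ ω₁, then N is an ω₂-end-extension of M, i.e., every ordinal ξ ∈ N ∩ ω₂ satisfies ξ ∈ M or ξ ≥ sup(M ∩ ω₂). -/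
/-!
Suppose `ξ ∈ N ∩ ω₂` is not in `M` but lies below some `ζ ∈ M ∩ ω₂`. Since `M` and `N`
agree below `ω₁`, `ω₁ ≤ ξ < ζ`, so `#ζ = ℵ₁`. In `H(θ)`, `ω₁` is definable from `ζ` as the
least element of `ζ` that maps onto `ζ`, hence `ω₁ ∈ M`, and then `M` contains a surjection
`f : ω₁ → ζ`. By elementarity of `N`, `ξ = f α` for some `α ∈ N ∩ ω₁ = M ∩ ω₁`, and by
elementarity of `M`, `f α ∈ M`: a contradiction.

All the relations used are first-order definable over any transitive class closed under
unordered pairs, such as `H(θ)` for regular `θ`.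
-/

open FirstOrder

universe u

/-- The first-order structure on a set `s` of ZF sets, in the language `Language.graph`
of a single binary relation symbol, interpreting the relation as membership `∈`. -/
def memStructure (s : Set ZFSet.{u}) : Language.graph.Structure ↥s where
  funMap := fun f _ => nomatch f
  RelMap := fun r x => match r with | .adj => (x 0).val ∈ (x 1).val

/-- Realization of a first-order formula (in the language of one binary relation)
in the set `s` of ZF sets, where the relation is interpreted as membership. -/
def RealizeIn (s : Set ZFSet.{u}) {n : ℕ} (φ : Language.graph.Formula (Fin n))
    (v : Fin n → ↥s) : Prop :=
  letI := memStructure s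
  φ.Realize v

/-- `s ≺ t`: `s ⊆ t` and, with both regarded as `∈`-structures, every first-order
formula with parameters from `s` holds in `s` iff it holds in `t`. -/
def ElemSubset (s t : Set ZFSet.{u}) : Prop :=
  ∃ h : s ⊆ t, ∀ (n : ℕ) (φ : Language.graph.Formula (Fin n)) (v : Fin n → ↥s),
    RealizeIn s φ v ↔ RealizeIn t φ (Set.inclusion h ∘ v)

/-- `H(θ)`: the collection of ZF sets whose transitive closure has cardinality `< θ`. -/
def HSet (θ : Cardinal.{u + 1}) : Set ZFSet.{u} :=
  {x | Cardinal.mk {y : ZFSet.{u} // Relation.TransGen (· ∈ ·) y x} < θ}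

/-- `o` is the von Neumann ordinal `ω₁` (resp. `ω₂` for `c = ℵ₂`): the least
(von Neumann) ordinal of cardinality `c`. -/
def IsVNInitialOrdinal (c : Cardinal.{u + 1}) (o : ZFSet.{u}) : Prop :=
  o.IsOrdinal ∧ Cardinal.mk o.toSet = c ∧ ∀ y ∈ o.toSet, Cardinal.mk (ZFSet.toSet y) < c

open Cardinal Language

section TransitiveClass

def IsTransitiveClass (s : Set ZFSet.{u}) : Prop :=
  ∀ x ∈ s, ∀ y ∈ x, y ∈ s

def IsPairClosed (s : Set ZFSet.{u}) : Prop :=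
  ∀ a ∈ s, ∀ b ∈ s, ({a, b} : ZFSet.{u}) ∈ s

variable {s : Set ZFSet.{u}} {f a b : ZFSet.{u}}

theorem IsPairClosed.pair_mem (hp : IsPairClosed s)
    (ha : a ∈ s) (hb : b ∈ s) : ZFSet.pair a b ∈ s := by
  have hsingleton := hp a ha a ha
  rw [ZFSet.pair_eq_singleton] at hsingleton
  exact hp _ hsingleton _ (hp a ha b hb)

theorem IsTransitiveClass.fst_mem_of_pair_mem (hs : IsTransitiveClass s) (hf : f ∈ s)
    (h : ZFSet.pair a b ∈ f) : a ∈ s :=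
  hs _ (hs _ (hs f hf _ h) {a, b} (by simp [ZFSet.pair])) a (by simp)

theorem IsTransitiveClass.snd_mem_of_pair_mem (hs : IsTransitiveClass s) (hf : f ∈ s)
    (h : ZFSet.pair a b ∈ f) : b ∈ s :=
  hs _ (hs _ (hs f hf _ h) {a, b} (by simp [ZFSet.pair])) b (by simp)

theorem IsTransitiveClass.eq_iff_forall_mem_iff (hs : IsTransitiveClass s) {x y : ZFSet.{u}}
    (hx : x ∈ s) (hy : y ∈ s) : x = y ↔ ∀ z ∈ s, (z ∈ x ↔ z ∈ y) :=
  ⟨fun h _ _ => h ▸ Iff.rfl, fun h => ZFSet.ext fun z =>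
    ⟨fun hz => (h z (hs x hx z hz)).1 hz, fun hz => (h z (hs y hy z hz)).2 hz⟩⟩

end TransitiveClass

section HSet

variable {θ : Cardinal.{u + 1}} {x y : ZFSet.{u}}

theorem isTransitiveClass_HSet : IsTransitiveClass (HSet θ) := fun _ hx y hy =>
  lt_of_le_of_lt (mk_le_mk_of_subset (s := {z | Relation.TransGen (· ∈ ·) z y})
    fun _ hz => hz.tail hy) hx

theorem mk_lt_of_mem_HSet (hx : x ∈ HSet θ) : #x.toSet < θ :=
  (mk_le_mk_of_subset fun _ hz => Relation.TransGen.single hz).trans_lt hx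

theorem mem_HSet_of_mk_lt (hθ : θ.IsRegular) (hx : #x.toSet < θ)
    (h : ∀ y ∈ x, y ∈ HSet θ) : x ∈ HSet θ := by
  have hsub : {z | Relation.TransGen (· ∈ ·) z x} ⊆
      x.toSet ∪ ⋃ y : x.toSet, {z | Relation.TransGen (· ∈ ·) z y.1} := by
    intro z hz
    cases hz with
    | single hzx => exact Or.inl hzx
    | tail hzy hyx => exact Or.inr (Set.mem_iUnion.2 ⟨⟨_, hyx⟩, hzy⟩)
  refine (mk_le_mk_of_subset hsub).trans_lt ((mk_union_le _ _).trans_lt ?_)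
  refine add_lt_of_lt hθ.aleph0_le hx (mk_iUnion_le_sum_mk.trans_lt ?_)
  exact sum_lt_of_isRegular hθ hx fun y => h y.1 y.2

theorem isPairClosed_HSet (hθ : θ.IsRegular) : IsPairClosed (HSet θ) := fun x hx y hy => by
  refine mem_HSet_of_mk_lt hθ ?_ fun z hz => ?_
  · change #(({x, y} : ZFSet.{u}) : Set ZFSet.{u}) < θ
    rw [ZFSet.coe_insert, ZFSet.coe_singleton]
    exact (Set.toFinite _).lt_aleph0.trans_le hθ.aleph0_le
  · rcases ZFSet.mem_pair.1 hz with rfl | rfl <;> assumption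

end HSet

section SurjectsOnto

variable {θ : Cardinal.{u + 1}} {f w z : ZFSet.{u}}

/-- `f` is read as a relation of Kuratowski pairs; it need not be contained in `w × z` nor be
total on `w`. -/
structure SurjectsOnto (f w z : ZFSet.{u}) : Prop where
  functional : ∀ a b b', ZFSet.pair a b ∈ f → ZFSet.pair a b' ∈ f → b = b'
  exists_pair_mem : ∀ b ∈ z, ∃ a ∈ w, ZFSet.pair a b ∈ f

theorem SurjectsOnto.mk_le (h : SurjectsOnto f w z) : #z.toSet ≤ #w.toSet := by
  choose g hgw hgf using fun b : z.toSet => h.exists_pair_mem b.1 b.2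
  refine mk_le_of_injective (f := fun b => (⟨g b, hgw b⟩ : w.toSet)) fun b b' hbb' => ?_
  have hg : g b = g b' := Subtype.ext_iff.1 hbb'
  exact Subtype.ext (h.functional _ _ _ (hgf b) (hg ▸ hgf b'))

theorem exists_surjectsOnto_mem_HSet (hθ : θ.IsRegular) (hw : w ∈ HSet θ) (hz : z ∈ HSet θ)
    (h : #z.toSet ≤ #w.toSet) : ∃ f ∈ HSet θ, SurjectsOnto f w z := by
  obtain ⟨g⟩ := h
  refine ⟨ZFSet.range fun b : z => ZFSet.pair (g b).1 b.1, ?_, ?_, ?_⟩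
  · refine mem_HSet_of_mk_lt hθ ?_ fun p hp => ?_
    · change #((ZFSet.range _ : ZFSet.{u}) : Set ZFSet.{u}) < θ
      rw [ZFSet.coe_range]
      exact mk_range_le.trans_lt (mk_lt_of_mem_HSet hz)
    · obtain ⟨b, rfl⟩ := ZFSet.mem_range.1 hp
      exact (isPairClosed_HSet hθ).pair_mem
        (isTransitiveClass_HSet _ hw _ (g b).2) (isTransitiveClass_HSet _ hz _ b.2)
  · intro a b b' hb hb'
    obtain ⟨c, hc⟩ := ZFSet.mem_range.1 hb
    obtain ⟨c', hc'⟩ := ZFSet.mem_range.1 hb'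
    obtain ⟨hca, rfl⟩ := ZFSet.pair_inj.1 hc
    obtain ⟨hca', rfl⟩ := ZFSet.pair_inj.1 hc'
    rw [g.injective (Subtype.ext (hca.trans hca'.symm))]
  · exact fun b hb => ⟨_, (g ⟨b, hb⟩).2, ZFSet.mem_range.2 ⟨⟨b, hb⟩, rfl⟩⟩

end SurjectsOnto

section Definability

attribute [local instance] memStructure

variable {s : Set ZFSet.{u}} {n m : ℕ}

def DefinableIn (s : Set ZFSet.{u}) (R : (Fin n → ZFSet.{u}) → Prop) : Prop :=
  ∃ φ : Language.graph.Formula (Fin n), ∀ v : Fin n → s, RealizeIn s φ v ↔ R fun i => v i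

noncomputable def existsFormula (φ : Language.graph.Formula (Fin (n + 1))) :
    Language.graph.Formula (Fin n) :=
  Formula.iExs (Fin 1) (φ.relabel (Fin.cons (Sum.inr 0) Sum.inl))

theorem realizeIn_existsFormula (φ : Language.graph.Formula (Fin (n + 1))) (v : Fin n → s) :
    RealizeIn s (existsFormula φ) v ↔ ∃ x, RealizeIn s φ (Matrix.vecCons x v) := by
  simp only [RealizeIn, existsFormula, Formula.realize_iExs, Formula.realize_relabel,
    Fin.comp_cons, Sum.elim_inr, Sum.elim_comp_inl]
  exact ⟨fun ⟨i, h⟩ => ⟨i 0, h⟩, fun ⟨x, h⟩ => ⟨fun _ => x, h⟩⟩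

theorem coe_vecCons (x : s) (v : Fin n → s) :
    (fun i => ((Matrix.vecCons x v : Fin (n + 1) → s) i : ZFSet.{u})) =
      Matrix.vecCons (x : ZFSet.{u}) fun i => (v i : ZFSet.{u}) :=
  Fin.comp_cons Subtype.val x v

theorem realizeIn_existsFormula_iff {R : (Fin (n + 1) → ZFSet.{u}) → Prop}
    {φ : Language.graph.Formula (Fin (n + 1))} (hφ : ∀ v, RealizeIn s φ v ↔ R fun i => v i)
    (v : Fin n → s) :
    RealizeIn s (existsFormula φ) v ↔ ∃ x ∈ s, R (Matrix.vecCons x fun i => v i) := by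
  simp only [realizeIn_existsFormula, hφ, coe_vecCons, Subtype.exists, exists_prop]

theorem DefinableIn.congr {R R' : (Fin n → ZFSet.{u}) → Prop} (h : DefinableIn s R)
    (hR : ∀ v : Fin n → s, R (fun i => v i) ↔ R' fun i => v i) : DefinableIn s R' :=
  let ⟨φ, hφ⟩ := h
  ⟨φ, fun v => (hφ v).trans (hR v)⟩

theorem definableIn_mem (i j : Fin n) : DefinableIn s fun v => v i ∈ v j :=
  ⟨Language.adj.formula₂ (Term.var i) (Term.var j), fun _ => Formula.realize_rel₂⟩

theorem definableIn_eq (i j : Fin n) : DefinableIn s fun v => v i = v j :=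
  ⟨Term.equal (Term.var i) (Term.var j), fun _ => Formula.realize_equal.trans Subtype.ext_iff⟩

theorem DefinableIn.comp {R : (Fin n → ZFSet.{u}) → Prop} (h : DefinableIn s R)
    (g : Fin n → Fin m) : DefinableIn s fun v => R (v ∘ g) :=
  let ⟨φ, hφ⟩ := h
  ⟨φ.relabel g, fun v => Formula.realize_relabel.trans (hφ (v ∘ g))⟩

theorem DefinableIn.not {R : (Fin n → ZFSet.{u}) → Prop} (h : DefinableIn s R) :
    DefinableIn s fun v => ¬R v :=
  let ⟨φ, hφ⟩ := h
  ⟨φ.not, fun v => Formula.realize_not.trans (hφ v).not⟩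

theorem DefinableIn.and {R R' : (Fin n → ZFSet.{u}) → Prop} (h : DefinableIn s R)
    (h' : DefinableIn s R') : DefinableIn s fun v => R v ∧ R' v :=
  let ⟨φ, hφ⟩ := h
  let ⟨ψ, hψ⟩ := h'
  ⟨φ ⊓ ψ, fun v => Formula.realize_inf.trans (and_congr (hφ v) (hψ v))⟩

theorem DefinableIn.or {R R' : (Fin n → ZFSet.{u}) → Prop} (h : DefinableIn s R)
    (h' : DefinableIn s R') : DefinableIn s fun v => R v ∨ R' v :=
  let ⟨φ, hφ⟩ := h
  let ⟨ψ, hψ⟩ := h'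
  ⟨φ ⊔ ψ, fun v => Formula.realize_sup.trans (or_congr (hφ v) (hψ v))⟩

theorem DefinableIn.imp {R R' : (Fin n → ZFSet.{u}) → Prop} (h : DefinableIn s R)
    (h' : DefinableIn s R') : DefinableIn s fun v => R v → R' v :=
  let ⟨φ, hφ⟩ := h
  let ⟨ψ, hψ⟩ := h'
  ⟨φ.imp ψ, fun v => Formula.realize_imp.trans (imp_congr (hφ v) (hψ v))⟩

theorem DefinableIn.iff {R R' : (Fin n → ZFSet.{u}) → Prop} (h : DefinableIn s R)
    (h' : DefinableIn s R') : DefinableIn s fun v => (R v ↔ R' v) :=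
  let ⟨φ, hφ⟩ := h
  let ⟨ψ, hψ⟩ := h'
  ⟨φ.iff ψ, fun v => Formula.realize_iff.trans (iff_congr (hφ v) (hψ v))⟩

theorem DefinableIn.exists {R : (Fin (n + 1) → ZFSet.{u}) → Prop} (h : DefinableIn s R) :
    DefinableIn s fun v => ∃ x ∈ s, R (Matrix.vecCons x v) :=
  let ⟨φ, hφ⟩ := h
  ⟨existsFormula φ, realizeIn_existsFormula_iff hφ⟩

theorem DefinableIn.forall {R : (Fin (n + 1) → ZFSet.{u}) → Prop} (h : DefinableIn s R) :
    DefinableIn s fun v => ∀ x ∈ s, R (Matrix.vecCons x v) :=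
  h.not.exists.not.congr fun v => by simp

theorem DefinableIn.exists_mem (hs : IsTransitiveClass s)
    {R : (Fin (n + 1) → ZFSet.{u}) → Prop} (h : DefinableIn s R) (i : Fin n) :
    DefinableIn s fun v => ∃ x ∈ v i, R (Matrix.vecCons x v) :=
  ((definableIn_mem 0 i.succ).and h).exists.congr fun v =>
    ⟨fun ⟨x, _, hx, hR⟩ => ⟨x, hx, hR⟩,
      fun ⟨x, hx, hR⟩ => ⟨x, hs _ (v i).2 _ hx, hx, hR⟩⟩

theorem DefinableIn.forall_mem (hs : IsTransitiveClass s)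
    {R : (Fin (n + 1) → ZFSet.{u}) → Prop} (h : DefinableIn s R) (i : Fin n) :
    DefinableIn s fun v => ∀ x ∈ v i, R (Matrix.vecCons x v) :=
  ((definableIn_mem 0 i.succ).imp h).forall.congr fun v =>
    ⟨fun hR x hx => hR x (hs _ (v i).2 _ hx) hx, fun hR x _ hx => hR x hx⟩

end Definability

section DefinableRelations

variable {s : Set ZFSet.{u}}

theorem definableIn_eq_doubleton (hs : IsTransitiveClass s) (hp : IsPairClosed s) :
    DefinableIn s fun v : Fin 3 → ZFSet.{u} => v 0 = {v 1, v 2} :=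
  ((definableIn_mem 0 1).iff ((definableIn_eq 0 2).or (definableIn_eq 0 3))).forall.congr
    fun v => by
      rw [hs.eq_iff_forall_mem_iff (v 0).2 (hp _ (v 1).2 _ (v 2).2)]
      simp

theorem definableIn_eq_pair (hs : IsTransitiveClass s) (hp : IsPairClosed s) :
    DefinableIn s fun v : Fin 3 → ZFSet.{u} => v 0 = ZFSet.pair (v 1) (v 2) :=
  ((definableIn_mem 0 1).iff (((definableIn_eq_doubleton hs hp).comp ![0, 2, 2]).or
    ((definableIn_eq_doubleton hs hp).comp ![0, 2, 3]))).forall.congr fun v => by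
      rw [hs.eq_iff_forall_mem_iff (v 0).2
        (hp.pair_mem (v 1).2 (v 2).2)]
      simp [ZFSet.pair, ZFSet.pair_eq_singleton]

theorem definableIn_pair_mem (hs : IsTransitiveClass s) (hp : IsPairClosed s) :
    DefinableIn s fun v : Fin 3 → ZFSet.{u} => ZFSet.pair (v 0) (v 1) ∈ v 2 :=
  (((definableIn_eq_pair hs hp).comp ![0, 1, 2]).exists_mem hs 2).congr fun v => by simp

theorem definableIn_surjectsOnto (hs : IsTransitiveClass s) (hp : IsPairClosed s) :
    DefinableIn s fun v : Fin 3 → ZFSet.{u} => SurjectsOnto (v 0) (v 1) (v 2) := by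
  have hpm := definableIn_pair_mem hs hp
  refine ((((hpm.comp ![2, 1, 3]).imp ((hpm.comp ![2, 0, 3]).imp (definableIn_eq 1 0))).forall
    |>.forall.forall).and (((hpm.comp ![0, 1, 2]).exists_mem hs 2).forall_mem hs 2)).congr
    fun v => ⟨fun ⟨hfun, hsurj⟩ => ⟨fun a b b' hb hb' => ?_, hsurj⟩,
      fun ⟨hfun, hsurj⟩ => ⟨fun a _ b _ b' _ => hfun a b b', hsurj⟩⟩
  exact hfun a (hs.fst_mem_of_pair_mem (v 0).2 hb) b (hs.snd_mem_of_pair_mem (v 0).2 hb) b'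
    (hs.snd_mem_of_pair_mem (v 0).2 hb') hb hb'

structure IsLeastSurjDomain (s : Set ZFSet.{u}) (w z : ZFSet.{u}) : Prop where
  mem : w ∈ z
  exists_surjectsOnto : ∃ f ∈ s, SurjectsOnto f w z
  not_surjectsOnto : ∀ w' ∈ w, ∀ f ∈ s, ¬SurjectsOnto f w' z

theorem IsLeastSurjDomain.eq {w w' z : ZFSet.{u}} (hz : z.IsOrdinal)
    (hw : IsLeastSurjDomain s w z) (hw' : IsLeastSurjDomain s w' z) : w = w' := by
  obtain ⟨f, hfs, hf⟩ := hw.exists_surjectsOnto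
  obtain ⟨f', hf's, hf'⟩ := hw'.exists_surjectsOnto
  rcases (hz.mem hw.mem).mem_trichotomous (hz.mem hw'.mem) with h | h | h
  · exact (hw'.not_surjectsOnto w h f hfs hf).elim
  · exact h
  · exact (hw.not_surjectsOnto w' h f' hf's hf').elim

theorem definableIn_isLeastSurjDomain (hs : IsTransitiveClass s) (hp : IsPairClosed s) :
    DefinableIn s fun v : Fin 2 → ZFSet.{u} => IsLeastSurjDomain s (v 0) (v 1) :=
  ((definableIn_mem 0 1).and ((definableIn_surjectsOnto hs hp).exists.and
    (((definableIn_surjectsOnto hs hp).comp ![0, 1, 3]).not.forall.forall_mem hs 0))).congr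
    fun _ => ⟨fun ⟨hmem, hsurj, hleast⟩ => ⟨hmem, hsurj, hleast⟩,
      fun ⟨hmem, hsurj, hleast⟩ => ⟨hmem, hsurj, hleast⟩⟩

end DefinableRelations

section ElementarySubstructures

variable {s t r : Set ZFSet.{u}} {n : ℕ}

theorem ElemSubset.trans (hst : ElemSubset s t) (htr : ElemSubset t r) : ElemSubset s r :=
  ⟨hst.1.trans htr.1, fun n φ v => (hst.2 n φ v).trans (htr.2 n φ _)⟩

theorem ElemSubset.exists_mem_of_definableIn (hst : ElemSubset s t)
    {R : (Fin (n + 1) → ZFSet.{u}) → Prop} (hR : DefinableIn t R) {v : Fin n → ZFSet.{u}}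
    (hv : ∀ i, v i ∈ s) (h : ∃ x ∈ t, R (Matrix.vecCons x v)) :
    ∃ x ∈ s, R (Matrix.vecCons x v) := by
  obtain ⟨hsub, hiff⟩ := hst
  obtain ⟨φ, hφ⟩ := hR
  have hφs : ∀ v : Fin (n + 1) → s, RealizeIn s φ v ↔ R fun i => v i :=
    fun v => (hiff _ φ v).trans (hφ _)
  exact (realizeIn_existsFormula_iff hφs fun i => ⟨v i, hv i⟩).1
    ((hiff _ _ _).2 ((realizeIn_existsFormula_iff hφ _).2 h))

theorem ElemSubset.mem_of_pair_mem (hst : ElemSubset s t) (hs : IsTransitiveClass t)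
    (hp : IsPairClosed t) {f a b : ZFSet.{u}} (hf : f ∈ s) (ha : a ∈ s)
    (hab : ZFSet.pair a b ∈ f) (hfun : ∀ b', ZFSet.pair a b' ∈ f → b' = b) : b ∈ s := by
  obtain ⟨y, hys, hy⟩ := hst.exists_mem_of_definableIn (v := ![a, f])
    ((definableIn_pair_mem hs hp).comp ![1, 0, 2]) (fun i => by fin_cases i <;> assumption)
    ⟨b, hs.snd_mem_of_pair_mem (hst.1 hf) hab, hab⟩
  exact hfun y hy ▸ hys

theorem ElemSubset.exists_pair_mem (hst : ElemSubset s t) (hs : IsTransitiveClass t)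
    (hp : IsPairClosed t) {f w b : ZFSet.{u}} (hf : f ∈ s) (hw : w ∈ s) (hb : b ∈ s)
    (h : ∃ a ∈ w, ZFSet.pair a b ∈ f) : ∃ a ∈ s, a ∈ w ∧ ZFSet.pair a b ∈ f := by
  obtain ⟨a, haw, hab⟩ := h
  exact hst.exists_mem_of_definableIn (v := ![f, w, b])
    ((definableIn_mem 0 2).and ((definableIn_pair_mem hs hp).comp ![0, 3, 1]))
    (fun i => by fin_cases i <;> assumption) ⟨a, hs _ (hst.1 hw) _ haw, haw, hab⟩

end ElementarySubstructures

theorem IsVNInitialOrdinal.mk_le_aleph_one {o y : ZFSet.{u}}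
    (ho : IsVNInitialOrdinal (Cardinal.aleph 2) o) (hy : y ∈ o) :
    #y.toSet ≤ Cardinal.aleph 1 := by
  have hlt := ho.2.2 y hy
  rwa [← one_add_one_eq_two, ← succ_aleph, Order.lt_succ_iff] at hlt

theorem IsVNInitialOrdinal.mem_of_elemSubset {θ c : Cardinal.{u + 1}} {o z : ZFSet.{u}}
    {M : Set ZFSet.{u}} (ho : IsVNInitialOrdinal c o) (hθ : θ.IsRegular)
    (hMH : ElemSubset M (HSet θ)) (hzM : z ∈ M) (hz : z.IsOrdinal) (hoz : o ∈ z)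
    (hzc : #z.toSet ≤ c) : o ∈ M := by
  have hzH : z ∈ HSet θ := hMH.1 hzM
  have hoH : o ∈ HSet θ := isTransitiveClass_HSet z hzH o hoz
  have hzo : #z.toSet = #o.toSet :=
    ho.2.1 ▸ le_antisymm hzc (ho.2.1 ▸ mk_le_mk_of_subset (hz.subset_of_mem hoz))
  have hleast : IsLeastSurjDomain (HSet θ) o z :=
    ⟨hoz, exists_surjectsOnto_mem_HSet hθ hoH hzH hzo.le,
      fun w hw _ _ hf => (hf.mk_le.trans_lt (ho.2.1 ▸ ho.2.2 w hw)).ne hzo⟩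
  obtain ⟨w, hwM, hw⟩ := hMH.exists_mem_of_definableIn (v := ![z])
    (definableIn_isLeastSurjDomain isTransitiveClass_HSet (isPairClosed_HSet hθ))
    (by simpa using hzM) ⟨o, hoH, hleast⟩
  exact IsLeastSurjDomain.eq hz hw hleast ▸ hwM

theorem end_extension_of_omega1_eq_general (θ : Cardinal.{u + 1}) (o1 o2 : ZFSet.{u})
    (M N : Set ZFSet.{u})
    (hθreg : θ.IsRegular)
    (ho1 : IsVNInitialOrdinal (Cardinal.aleph 1) o1)
    (ho2 : IsVNInitialOrdinal (Cardinal.aleph 2) o2)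
    (hMN : ElemSubset M N) (hNH : ElemSubset N (HSet θ))
    (homega1 : M ∩ o1.toSet = N ∩ o1.toSet) :
    ∀ ξ ∈ N ∩ o2.toSet, ξ ∈ M ∨ ∀ ζ ∈ M ∩ o2.toSet, ζ ⊆ ξ := by
  rintro ξ ⟨hξN, hξo2⟩
  by_contra! ⟨hξM, ζ, ⟨hζM, hζo2⟩, hζξ⟩
  have hMH := hMN.trans hNH
  have hs : IsTransitiveClass (HSet θ) := isTransitiveClass_HSet
  have hp : IsPairClosed (HSet θ) := isPairClosed_HSet hθreg
  have hagree : ∀ α ∈ N, α ∈ o1 → α ∈ M := fun α hαN hαo1 =>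
    ((Set.ext_iff.1 homega1 α).2 ⟨hαN, hαo1⟩).1
  have hξ : ξ.IsOrdinal := ho2.1.mem hξo2
  have hζ : ζ.IsOrdinal := ho2.1.mem hζo2
  have hξζ : ξ ∈ ζ := (hζ.not_subset_iff_mem hξ).1 hζξ
  have ho1ζ : o1 ∈ ζ := ho1.1.mem_of_subset_of_mem hζ
    ((hξ.notMem_iff_subset ho1.1).1 fun hξo1 => hξM (hagree ξ hξN hξo1)) hξζ
  have hζcard : #ζ.toSet ≤ Cardinal.aleph 1 := ho2.mk_le_aleph_one hζo2
  have ho1M : o1 ∈ M := ho1.mem_of_elemSubset hθreg hMH hζM hζ ho1ζ hζcard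
  obtain ⟨f, hfM, hf⟩ := hMH.exists_mem_of_definableIn (v := ![o1, ζ])
    (definableIn_surjectsOnto hs hp) (fun i => by fin_cases i <;> assumption)
    (exists_surjectsOnto_mem_HSet hθreg (hs _ (hMH.1 hζM) _ ho1ζ) (hMH.1 hζM)
      (hζcard.trans_eq ho1.2.1.symm))
  obtain ⟨α, hαN, hαo1, hαξ⟩ := hNH.exists_pair_mem hs hp (hMN.1 hfM) (hMN.1 ho1M) hξN
    (hf.exists_pair_mem ξ hξζ)
  exact hξM (hMH.mem_of_pair_mem hs hp hfM (hagree α hαN hαo1) hαξ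
    fun _ hαy => hf.functional _ _ _ hαy hαξ)

/-- Let `θ` be a regular cardinal with `θ > ω₂`, and let `M, N` be
countable sets with `M ≺ N ≺ (H(θ), ∈)`. If `M ∩ ω₁ = N ∩ ω₁` then `N` is an
`ω₂`-end-extension of `M`: every ordinal `ξ ∈ N ∩ ω₂` satisfies `ξ ∈ M` or
`ξ ≥ sup (M ∩ ω₂)` (i.e. `ζ ≤ ξ`, that is `ζ ⊆ ξ`, for every `ζ ∈ M ∩ ω₂`). -/
theorem end_extension_of_omega1_eq (θ : Cardinal.{u + 1}) (o1 o2 : ZFSet.{u})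
    (M N : Set ZFSet.{u})
    (hθreg : θ.IsRegular) (hθ : Cardinal.aleph 2 < θ)
    (ho1 : IsVNInitialOrdinal (Cardinal.aleph 1) o1)
    (ho2 : IsVNInitialOrdinal (Cardinal.aleph 2) o2)
    (hMc : M.Countable) (hNc : N.Countable)
    (hMN : ElemSubset M N) (hNH : ElemSubset N (HSet θ))
    (homega1 : M ∩ o1.toSet = N ∩ o1.toSet) :
    ∀ ξ ∈ N ∩ o2.toSet, ξ ∈ M ∨ ∀ ζ ∈ M ∩ o2.toSet, ζ ⊆ ξ :=
  end_extension_of_omega1_eq_general θ o1 o2 M N hθreg ho1 ho2 hMN hNH homega1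
end
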